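/- arXiv:1304.0616 — 2 statements merged into one kernel-verified Lean document; each statement's English description precedes it below -/
import Mathlib

section
/- For 0 < α < 1 and L > 0, the fixed-memory-length fractional derivative of cos satisfies D^α_L(cos)(t) = a·cos(t-L) − b·sin(t-L), where a = L^(-α)·E_{2,1-α}(-L²) and b = L^(1-α)·E_{2,2-α}(-L²). -/
/-!
Substituting `u = t - τ` and expanding
`cos (t - u) = cos (t - L) cos (L - u) - sin (t - L) sin (L - u)` reduces the memory integral to
the Riemann–Liouville integrals `∫₀ᴸ u^(β-1) cos (L - u) du` and `∫₀ᴸ u^(β-1) sin (L - u) du`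
with `β = 2 - α`. Integrating the Taylor series of `cos` and `sin` termwise against `u^(β-1)`
with the Beta integral gives `Γ(β) L^β E_{2,β+1}(-L²)` and `Γ(β) L^(β+1) E_{2,β+2}(-L²)`, and
the recurrence `E_{a,b}(z) = 1/Γ(b) + z E_{a,a+b}(z)` absorbs the two boundary terms of `D^α_L`
into the Mittag-Leffler functions of the statement.
-/

open Real

noncomputable def Dfml (α L : ℝ) (f : ℝ → ℝ) (t : ℝ) : ℝ :=
  f (t - L) * L ^ (-α) / Real.Gamma (1 - α)
  + deriv f (t - L) * L ^ (1 - α) / Real.Gamma (2 - α)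
  + (1 / Real.Gamma (2 - α)) * ∫ τ in (t - L)..t, (t - τ) ^ (1 - α) * deriv (deriv f) τ

noncomputable def mittagLeffler (a b z : ℝ) : ℝ := ∑' k : ℕ, z ^ k / Real.Gamma (a * k + b)

open MeasureTheory intervalIntegral Set
open scoped Nat

theorem integral_rpow_mul_one_sub_rpow {a b : ℝ} (ha : 0 < a) (hb : 0 < b) :
    ∫ x in (0:ℝ)..1, x ^ (a - 1) * (1 - x) ^ (b - 1) = Gamma a * Gamma b / Gamma (a + b) := by
  have h := Complex.betaIntegral_eq_Gamma_mul_div a b (by simpa) (by simpa)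
  rw [← Complex.ofReal_add, Complex.Gamma_ofReal, Complex.Gamma_ofReal, Complex.Gamma_ofReal]
    at h
  apply Complex.ofReal_injective
  push_cast
  rw [← h, Complex.betaIntegral, ← intervalIntegral.integral_ofReal]
  refine integral_congr fun x hx => ?_
  rw [uIcc_of_le zero_le_one] at hx
  push_cast
  rw [Complex.ofReal_cpow hx.1, ← Complex.ofReal_one, ← Complex.ofReal_sub,
    Complex.ofReal_cpow (sub_nonneg.2 hx.2)]
  push_cast
  ring_nf

theorem integral_rpow_mul_sub_rpow {a b L : ℝ} (ha : 0 < a) (hb : 0 < b) (hL : 0 < L) :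
    ∫ u in (0:ℝ)..L, u ^ (a - 1) * (L - u) ^ (b - 1)
      = Gamma a * Gamma b / Gamma (a + b) * L ^ (a + b - 1) := by
  have hscale : ∀ x ∈ uIcc (0:ℝ) 1, (L * x) ^ (a - 1) * (L - L * x) ^ (b - 1)
      = L ^ (a + b - 2) * (x ^ (a - 1) * (1 - x) ^ (b - 1)) := by
    intro x hx
    rw [uIcc_of_le zero_le_one] at hx
    rw [show L - L * x = L * (1 - x) by ring, mul_rpow hL.le hx.1,
      mul_rpow hL.le (sub_nonneg.2 hx.2), show a + b - 2 = (a - 1) + (b - 1) by ring,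
      rpow_add hL]
    ring
  have h := integral_comp_mul_left (a := 0) (b := 1)
    (fun u => u ^ (a - 1) * (L - u) ^ (b - 1)) hL.ne'
  rw [mul_zero, mul_one, integral_congr hscale, intervalIntegral.integral_const_mul,
    integral_rpow_mul_one_sub_rpow ha hb, smul_eq_mul] at h
  rw [eq_inv_mul_iff_mul_eq₀ hL.ne'] at h
  rw [← h, show a + b - 1 = (a + b - 2) + 1 by ring, rpow_add hL, rpow_one]
  ring

theorem integral_rpow_mul_sub_pow {β L : ℝ} (hβ : 0 < β) (hL : 0 < L) (n : ℕ) :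
    ∫ u in (0:ℝ)..L, u ^ (β - 1) * (L - u) ^ n
      = Gamma β * n ! / Gamma (β + n + 1) * L ^ (β + n) := by
  have h := integral_rpow_mul_sub_rpow hβ n.cast_add_one_pos hL
  simp only [add_sub_cancel_right, rpow_natCast, Gamma_nat_eq_factorial] at h
  rw [h, ← add_assoc, add_sub_cancel_right]

theorem hasSum_integral_mul_comp_sub {w f : ℝ → ℝ} {s : ℕ → ℝ} {e : ℕ → ℕ} {L : ℝ}
    (hL : 0 ≤ L) (hw : IntervalIntegrable w volume 0 L) (he : Function.Injective e)
    (hs : ∀ k, |s k| ≤ 1) (hf : ∀ x, HasSum (fun k => s k * x ^ e k / (e k)!) (f x)) :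
    HasSum (fun k => s k / (e k)! * ∫ u in (0:ℝ)..L, w u * (L - u) ^ e k)
      (∫ u in (0:ℝ)..L, w u * f (L - u)) := by
  have hsummable : Summable fun k => L ^ e k / (e k)! :=
    (summable_pow_div_factorial L).comp_injective he
  have h := hasSum_integral_of_dominated_convergence
    (F := fun k u => w u * (s k * (L - u) ^ e k / (e k)!))
    (fun k u => |w u| * (L ^ e k / (e k)!))
    (fun k => hw.def'.aestronglyMeasurable.mul (by fun_prop : Continuous _).aestronglyMeasurable)
    (fun k => ae_of_all _ fun u hu => ?_) (ae_of_all _ fun u _ => hsummable.mul_left _)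
    (by simpa only [tsum_mul_left] using hw.abs.mul_const _)
    (ae_of_all _ fun u _ => (hf (L - u)).mul_left (w u))
  · have hterm : ∀ k, ∫ u in (0:ℝ)..L, w u * (s k * (L - u) ^ e k / (e k)!)
        = s k / (e k)! * ∫ u in (0:ℝ)..L, w u * (L - u) ^ e k := fun k => by
      rw [← intervalIntegral.integral_const_mul]
      congr 1 with u
      ring
    simpa only [hterm] using h
  · rw [uIoc_of_le hL] at hu
    have hLu : |L - u| ≤ L := abs_le.2 ⟨by linarith [hu.2], by linarith [hu.1]⟩
    rw [norm_mul, norm_div, norm_mul, norm_pow, Real.norm_natCast, Real.norm_eq_abs,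
      Real.norm_eq_abs, Real.norm_eq_abs]
    gcongr
    exact (mul_le_mul (hs k) (pow_le_pow_left₀ (abs_nonneg _) hLu _) (by positivity)
      zero_le_one).trans_eq (one_mul _)

theorem hasSum_integral_rpow_mul_cos_sub {β L : ℝ} (hβ : 0 < β) (hL : 0 < L) :
    HasSum (fun k : ℕ => (-L ^ 2) ^ k / Gamma (2 * k + (β + 1)))
      ((∫ u in (0:ℝ)..L, u ^ (β - 1) * cos (L - u)) / (Gamma β * L ^ β)) := by
  have h := hasSum_integral_mul_comp_sub hL.le
    (intervalIntegrable_rpow' (r := β - 1) (by linarith))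
    (fun _ _ hkl => by simpa using hkl : Function.Injective fun k => 2 * k)
    (fun k => by simp) hasSum_cos
  have hterm : ∀ k : ℕ, (-1) ^ k / ((2 * k) ! : ℝ)
      * (∫ u in (0:ℝ)..L, u ^ (β - 1) * (L - u) ^ (2 * k)) / (Gamma β * L ^ β)
      = (-L ^ 2) ^ k / Gamma (2 * k + (β + 1)) := fun k => by
    have := (Gamma_pos_of_pos hβ).ne'
    have := (rpow_pos_of_pos hL β).ne'
    rw [integral_rpow_mul_sub_pow hβ hL, rpow_add hL, rpow_natCast, pow_mul, neg_pow (L ^ 2),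
      show β + ((2 * k : ℕ) : ℝ) + 1 = 2 * k + (β + 1) by push_cast; ring]
    field_simp
  simpa only [hterm] using h.div_const (Gamma β * L ^ β)

theorem hasSum_integral_rpow_mul_sin_sub {β L : ℝ} (hβ : 0 < β) (hL : 0 < L) :
    HasSum (fun k : ℕ => (-L ^ 2) ^ k / Gamma (2 * k + (β + 2)))
      ((∫ u in (0:ℝ)..L, u ^ (β - 1) * sin (L - u)) / (Gamma β * L ^ (β + 1))) := by
  have h := hasSum_integral_mul_comp_sub hL.le
    (intervalIntegrable_rpow' (r := β - 1) (by linarith))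
    (fun _ _ hkl => by simpa using hkl : Function.Injective fun k => 2 * k + 1)
    (fun k => by simp) hasSum_sin
  have hterm : ∀ k : ℕ, (-1) ^ k / ((2 * k + 1) ! : ℝ)
      * (∫ u in (0:ℝ)..L, u ^ (β - 1) * (L - u) ^ (2 * k + 1)) / (Gamma β * L ^ (β + 1))
      = (-L ^ 2) ^ k / Gamma (2 * k + (β + 2)) := fun k => by
    have := (Gamma_pos_of_pos hβ).ne'
    have := (rpow_pos_of_pos hL (β + 1)).ne'
    rw [integral_rpow_mul_sub_pow hβ hL,
      show β + ((2 * k + 1 : ℕ) : ℝ) = (β + 1) + (2 * k : ℕ) by push_cast; ring,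
      rpow_add hL, rpow_natCast, pow_mul, neg_pow (L ^ 2),
      show β + 1 + ((2 * k : ℕ) : ℝ) + 1 = 2 * k + (β + 2) by push_cast; ring]
    field_simp
  simpa only [hterm] using h.div_const (Gamma β * L ^ (β + 1))

theorem mittagLeffler_eq_of_hasSum {a b z s : ℝ}
    (h : HasSum (fun k : ℕ => z ^ k / Gamma (a * k + (a + b))) s) :
    mittagLeffler a b z = 1 / Gamma b + z * s := by
  set f : ℕ → ℝ := fun k => z ^ k / Gamma (a * k + b) with hf
  have hshift : HasSum (fun k => f (k + 1)) (z * s) := by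
    have hterm : ∀ k : ℕ, z * (z ^ k / Gamma (a * k + (a + b))) = f (k + 1) := fun k => by
      simp only [hf, Nat.cast_succ, pow_succ, mul_add_one, add_assoc]
      ring
    simpa only [hterm] using h.mul_left z
  rw [mittagLeffler, ← hf, ((summable_nat_add_iff 1).1 hshift.summable).tsum_eq_zero_add,
    hshift.tsum_eq, hf]
  simp

theorem integral_sub_rpow_mul_cos {c : ℝ} (hc : -1 < c) (t L : ℝ) :
    ∫ τ in (t - L)..t, (t - τ) ^ c * cos τ
      = cos (t - L) * (∫ u in (0:ℝ)..L, u ^ c * cos (L - u))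
        - sin (t - L) * ∫ u in (0:ℝ)..L, u ^ c * sin (L - u) := by
  have h := integral_comp_sub_left (fun u => u ^ c * cos (t - u)) t (a := t - L) (b := t)
  simp only [sub_sub_cancel, sub_self] at h
  have hint : ∀ g : ℝ → ℝ, Continuous g → IntervalIntegrable (fun u => u ^ c * g u) volume 0 L :=
    fun g hg => (intervalIntegrable_rpow' hc).mul_continuousOn hg.continuousOn
  have hexpand : ∀ u, u ^ c * cos (t - u) = cos (t - L) * (u ^ c * cos (L - u))
      - sin (t - L) * (u ^ c * sin (L - u)) := fun u => by
    rw [show t - u = (t - L) + (L - u) by ring, cos_add]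
    ring
  rw [h, integral_congr fun u _ => hexpand u, integral_sub
    ((hint _ (by fun_prop)).const_mul _) ((hint _ (by fun_prop)).const_mul _),
    intervalIntegral.integral_const_mul, intervalIntegral.integral_const_mul]

theorem stmt_6_general (α L : ℝ) (hα1 : α < 1) (hL : 0 < L) (t : ℝ) :
    Dfml α L Real.cos t
    = L ^ (-α) * mittagLeffler 2 (1 - α) (-L ^ 2) * Real.cos (t - L)
      - L ^ (1 - α) * mittagLeffler 2 (2 - α) (-L ^ 2) * Real.sin (t - L) := by
  have hβ : 0 < 2 - α := by linarith
  have hcos := hasSum_integral_rpow_mul_cos_sub hβ hL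
  have hsin := hasSum_integral_rpow_mul_sin_sub hβ hL
  rw [show 2 - α - 1 = 1 - α by ring, show 2 - α + 1 = 2 + (1 - α) by ring] at hcos
  rw [show 2 - α - 1 = 1 - α by ring, show 2 - α + 2 = 2 + (2 - α) by ring] at hsin
  have hderiv2_cos : deriv (deriv cos) = fun x => -cos x := by
    rw [deriv_cos']
    funext x
    rw [deriv.fun_neg, Real.deriv_sin]
  rw [mittagLeffler_eq_of_hasSum hcos, mittagLeffler_eq_of_hasSum hsin, Dfml, hderiv2_cos,
    deriv_cos']
  simp only [mul_neg, intervalIntegral.integral_neg]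
  rw [integral_sub_rpow_mul_cos (by linarith) t L, show 2 - α = 2 + -α by ring,
    show 2 + -α + 1 = 2 + (1 - α) by ring, rpow_add hL, rpow_add hL, rpow_two]
  have := (Gamma_pos_of_pos hβ).ne'
  have := (rpow_pos_of_pos hL (-α)).ne'
  have := (rpow_pos_of_pos hL (1 - α)).ne'
  field_simp
  ring

theorem stmt_6 (α L : ℝ) (hα0 : 0 < α) (hα1 : α < 1) (hL : 0 < L) (t : ℝ) :
    Dfml α L Real.cos t
    = L ^ (-α) * mittagLeffler 2 (1 - α) (-L ^ 2) * Real.cos (t - L)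
      - L ^ (1 - α) * mittagLeffler 2 (2 - α) (-L ^ 2) * Real.sin (t - L) :=
  stmt_6_general α L hα1 hL t
end

section
/- Let 0 < α < 1, L = 2π, a = (2π)^(-α)·E_{2,1-α}(-4π²), b = (2π)^(1-α)·E_{2,2-α}(-4π²), and A the 2×2 matrix [[a, -b], [b, a]]. Then for any c ∈ ℝ, the vector function X(t) = c·(cos t, sin t) satisfies the fractional autonomous system D^α_{2π} X(t) = A·X(t) componentwise, and X is a non-constant (for c ≠ 0) 2π-periodic solution. -/
/-! Substituting `s = t - τ` turns the memory integrals of `D^α_{2π} cos` and `D^α_{2π} sin`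
into the moments `∫₀^{2π} s^{1-α} cos s ds` and `∫₀^{2π} s^{1-α} sin s ds`, so both sides of the
system are combinations of `cos t` and `sin t`, and it remains to identify the coefficients.
Two integrations by parts, using `sin 2π = 0` and `cos 2π = 1`, give for the normalised moment
`m p = ∫₀^{2π} s^p cos s ds / Γ(p+1)` the recurrence `m (p+2) + m p = (2π)^(p+1) / Γ(p+2)`
(and its sine analogue). Along `p = 1 - α + 2k` the alternating sum of the right-hand sides
telescopes to `m (1 - α)`, because `|m p| ≤ (2π)^(p+1) / Γ(p+1) → 0`; that sum is the tail
`E_{2,3-α}(-4π²)` in `E_{2,1-α}(z) = 1/Γ(1-α) + z E_{2,3-α}(z)`, up to a power of `2π`. -/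

open Real Matrix

open Filter Topology intervalIntegral

noncomputable def cosMoment (L p : ℝ) : ℝ := ∫ s in 0..L, s ^ p * cos s

noncomputable def sinMoment (L p : ℝ) : ℝ := ∫ s in 0..L, s ^ p * sin s

section Moments

variable {L p : ℝ}

lemma hasDerivAt_rpow_add_one (hp : 0 ≤ p) (x : ℝ) :
    HasDerivAt (fun s : ℝ => s ^ (p + 1)) ((p + 1) * x ^ p) x := by
  simpa using hasDerivAt_rpow_const (x := x) (p := p + 1) (Or.inr (by linarith))

lemma cosMoment_add_one (hp : 0 ≤ p) :
    cosMoment L (p + 1) = L ^ (p + 1) * sin L - (p + 1) * sinMoment L p := by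
  have hcont := continuous_rpow_const hp
  have := integral_mul_deriv_eq_deriv_mul (a := 0) (b := L)
    (fun x _ => hasDerivAt_rpow_add_one hp x) (fun x _ => hasDerivAt_sin x)
    ((continuous_const.mul hcont).intervalIntegrable _ _) (continuous_cos.intervalIntegrable _ _)
  simp only [mul_assoc, integral_const_mul, sin_zero, mul_zero, sub_zero] at this
  rw [cosMoment, sinMoment, this]

lemma sinMoment_add_one (hp : 0 ≤ p) :
    sinMoment L (p + 1) = (p + 1) * cosMoment L p - L ^ (p + 1) * cos L := by
  have hcont := continuous_rpow_const hp
  have := integral_mul_deriv_eq_deriv_mul (a := 0) (b := L) (v := fun s => -cos s)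
    (fun x _ => hasDerivAt_rpow_add_one hp x) (fun x _ => by simpa using (hasDerivAt_cos x).fun_neg)
    ((continuous_const.mul hcont).intervalIntegrable _ _) (continuous_sin.intervalIntegrable _ _)
  simp only [mul_assoc, mul_neg, integral_neg, integral_const_mul,
    zero_rpow (by linarith : p + 1 ≠ 0), zero_mul, sub_neg_eq_add] at this
  rw [cosMoment, sinMoment, this]
  ring

lemma abs_integral_rpow_mul_le (hL : 0 ≤ L) (hp : 0 ≤ p) {g : ℝ → ℝ} (hg : ∀ x, |g x| ≤ 1) :
    |∫ s in 0..L, s ^ p * g s| ≤ L ^ p * L := by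
  have hbound : ∀ x ∈ Set.uIoc 0 L, ‖x ^ p * g x‖ ≤ L ^ p := by
    intro x hx
    rw [Set.uIoc_of_le hL] at hx
    rw [norm_mul, norm_eq_abs, abs_of_nonneg (rpow_nonneg hx.1.le p)]
    calc x ^ p * ‖g x‖ ≤ L ^ p * 1 :=
          mul_le_mul (rpow_le_rpow hx.1.le hx.2 hp) (hg x) (norm_nonneg _) (by positivity)
      _ = L ^ p := mul_one _
  simpa [abs_of_nonneg hL] using norm_integral_le_of_norm_le_const hbound

end Moments

lemma Gamma_add_three {p : ℝ} (hp : 0 < p + 1) :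
    Gamma (p + 3) = (p + 2) * (p + 1) * Gamma (p + 1) := by
  rw [show p + 3 = p + 1 + 1 + 1 by ring, Gamma_add_one (by linarith),
    Gamma_add_one (by linarith)]
  ring

lemma cosMoment_two_pi_add_two {p : ℝ} (hp : 0 ≤ p) :
    cosMoment (2 * π) (p + 2) / Gamma (p + 3) + cosMoment (2 * π) p / Gamma (p + 1)
      = (2 * π) ^ (p + 1) / Gamma (p + 2) := by
  have hG := Gamma_pos_of_pos (by linarith : 0 < p + 1)
  rw [Gamma_add_three (by linarith), show p + 2 = p + 1 + 1 by ring,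
    cosMoment_add_one (by linarith), sinMoment_add_one hp, Gamma_add_one (s := p + 1) (by linarith), sin_two_pi, cos_two_pi]
  field_simp
  ring

lemma sinMoment_two_pi_add_two {p : ℝ} (hp : 0 ≤ p) :
    sinMoment (2 * π) (p + 2) / Gamma (p + 3) + sinMoment (2 * π) p / Gamma (p + 1)
      = -((2 * π) ^ (p + 2) / Gamma (p + 3)) := by
  have hG := Gamma_pos_of_pos (by linarith : 0 < p + 1)
  rw [show p + 2 = p + 1 + 1 by ring, sinMoment_add_one (by linarith), cosMoment_add_one hp,
    Gamma_add_three (by linarith), sin_two_pi, cos_two_pi]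
  field_simp
  ring

lemma summable_mittagLeffler_two (z : ℝ) {b : ℝ} (hb : 0 < b) :
    Summable fun k : ℕ => z ^ k / Gamma (2 * k + b) := by
  obtain ⟨N, hN⟩ := exists_nat_ge |z|
  refine summable_of_ratio_norm_eventually_le (r := 1 / 2) (by norm_num) ?_
  filter_upwards [eventually_ge_atTop (N + 1)] with n hn
  have hn' : (N : ℝ) + 1 ≤ n := by exact_mod_cast hn
  have hG := Gamma_pos_of_pos (by positivity : 0 < 2 * (n : ℝ) + b)
  have hrec : Gamma (2 * ((n + 1 : ℕ) : ℝ) + b)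
      = (2 * n + b + 1) * (2 * n + b) * Gamma (2 * n + b) := by
    push_cast
    rw [show 2 * ((n : ℝ) + 1) + b = 2 * n + b + 1 + 1 by ring, Gamma_add_one (by positivity),
      Gamma_add_one (by positivity)]
    ring
  have hratio : |z| ≤ 1 / 2 * ((2 * n + b + 1) * (2 * n + b)) := by nlinarith
  have hD : 0 < (2 * (n : ℝ) + b + 1) * (2 * n + b) := by positivity
  rw [hrec, norm_div, norm_div, norm_pow, norm_pow, pow_succ, norm_of_nonneg hG.le,
    norm_of_nonneg (by positivity : (0 : ℝ) ≤ _ * _ * Gamma (2 * n + b)), norm_eq_abs z]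
  calc |z| ^ n * |z| / ((2 * n + b + 1) * (2 * n + b) * Gamma (2 * n + b))
      = |z| ^ n / Gamma (2 * n + b) * (|z| / ((2 * n + b + 1) * (2 * n + b))) := by
        rw [div_mul_div_comm, mul_comm (Gamma _)]
    _ ≤ |z| ^ n / Gamma (2 * n + b) * (1 / 2) := by
        refine mul_le_mul_of_nonneg_left ?_ (by positivity)
        rw [div_le_iff₀ hD]
        linarith
    _ = 1 / 2 * (|z| ^ n / Gamma (2 * n + b)) := mul_comm _ _

lemma mittagLeffler_two_eq (z : ℝ) {b : ℝ} (hb : 0 < b) :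
    mittagLeffler 2 b z = 1 / Gamma b + z * mittagLeffler 2 (b + 2) z := by
  rw [mittagLeffler, (summable_mittagLeffler_two z hb).tsum_eq_zero_add, mittagLeffler,
    ← tsum_mul_left]
  congr 1
  · simp
  · congr 1 with k
    push_cast
    rw [pow_succ, show 2 * ((k : ℝ) + 1) + b = 2 * k + (b + 2) by ring]
    ring

lemma rpow_two_mul_nat_add {L : ℝ} (hL : 0 < L) (k : ℕ) (b : ℝ) :
    L ^ (2 * (k : ℝ) + b) = (L ^ 2) ^ k * L ^ b := by
  rw [rpow_add hL, ← pow_mul, ← rpow_natCast]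
  push_cast
  ring_nf

lemma tendsto_rpow_div_Gamma_two_mul_add {L b : ℝ} (hL : 0 < L) (hb : 0 < b) :
    Tendsto (fun k : ℕ => L ^ (2 * (k : ℝ) + b) / Gamma (2 * k + b)) atTop (𝓝 0) := by
  have h := ((summable_mittagLeffler_two (L ^ 2) hb).tendsto_atTop_zero).mul_const (L ^ b)
  rw [zero_mul] at h
  refine h.congr fun k => ?_
  rw [rpow_two_mul_nat_add hL]
  ring

lemma hasSum_alternating_of_add_succ {x y : ℕ → ℝ} (h : ∀ k, x k + x (k + 1) = y k)
    (hx : Tendsto x atTop (𝓝 0)) (hs : Summable fun k => (-1) ^ k * y k) :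
    HasSum (fun k => (-1) ^ k * y k) (x 0) := by
  have hpartial : ∀ n, ∑ k ∈ Finset.range n, (-1) ^ k * y k = x 0 - (-1) ^ n * x n := by
    intro n
    induction n with
    | zero => simp
    | succ n ih => rw [Finset.sum_range_succ, ih, ← h, pow_succ]; ring
  have hsign : Tendsto (fun n => (-1) ^ n * x n) atTop (𝓝 0) :=
    squeeze_zero_norm (fun n => by simp) (tendsto_zero_iff_norm_tendsto_zero.mp hx)
  rw [hs.hasSum_iff_tendsto_nat, funext hpartial]
  simpa using hsign.const_sub (x 0)

lemma mul_rpow_mul_mittagLeffler_of_recurrence {L β r σ : ℝ} {m : ℝ → ℝ} (hL : 0 < L)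
    (hβ : 0 ≤ β) (hr : 0 ≤ r) (hm : ∀ p, 0 ≤ p → |m p| ≤ L ^ p * L)
    (hrec : ∀ p, 0 ≤ p → m (p + 2) / Gamma (p + 3) + m p / Gamma (p + 1)
      = σ * (L ^ (p + r) / Gamma (p + r + 1))) :
    σ * L ^ (β + r) * mittagLeffler 2 (β + r + 1) (-L ^ 2) = m β / Gamma (β + 1) := by
  set x : ℕ → ℝ := fun k => m (2 * k + β) / Gamma (2 * k + β + 1)
  set y : ℕ → ℝ := fun k => σ * (L ^ (2 * k + β + r) / Gamma (2 * k + β + r + 1))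
  have hxy : ∀ k, x k + x (k + 1) = y k := fun k => by
    have := hrec (2 * k + β) (by positivity)
    simp only [x, y]
    push_cast
    rw [show 2 * ((k : ℝ) + 1) + β = 2 * k + β + 2 by ring,
      show 2 * (k : ℝ) + β + 2 + 1 = 2 * k + β + 3 by ring]
    linarith
  have hx : Tendsto x atTop (𝓝 0) := by
    refine squeeze_zero_norm (fun k => ?_)
      (tendsto_rpow_div_Gamma_two_mul_add (b := β + 1) hL (by linarith))
    have hG := Gamma_pos_of_pos (by positivity : 0 < 2 * (k : ℝ) + β + 1)
    rw [norm_div, norm_of_nonneg hG.le, ← add_assoc, rpow_add_one hL.ne']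
    exact div_le_div_of_nonneg_right (hm _ (by positivity)) hG.le
  have hterm : ∀ k : ℕ, (-1) ^ k * y k
      = σ * L ^ (β + r) * ((-L ^ 2) ^ k / Gamma (2 * k + (β + r + 1))) := fun k => by
    simp only [y, add_assoc, rpow_two_mul_nat_add hL, neg_pow (L ^ 2)]
    ring
  have hs : Summable fun k => (-1) ^ k * y k := by
    simpa only [hterm] using (summable_mittagLeffler_two (-L ^ 2) (by positivity)).mul_left _
  have key := hasSum_alternating_of_add_succ hxy hx hs
  simp only [hterm] at key
  rw [mittagLeffler, ← tsum_mul_left, key.tsum_eq]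
  simp [x]

lemma two_pi_rpow_mul_mittagLeffler_cos {β : ℝ} (hβ : 0 ≤ β) :
    (2 * π) ^ (β + 1) * mittagLeffler 2 (β + 2) (-(4 * π ^ 2))
      = cosMoment (2 * π) β / Gamma (β + 1) := by
  have := mul_rpow_mul_mittagLeffler_of_recurrence (m := cosMoment (2 * π)) (σ := 1) (r := 1)
    two_pi_pos hβ zero_le_one
    (fun p hp => abs_integral_rpow_mul_le two_pi_pos.le hp abs_cos_le_one)
    (fun p hp => by
      rw [one_mul, add_assoc, one_add_one_eq_two]
      exact cosMoment_two_pi_add_two hp)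
  rwa [one_mul, add_assoc, one_add_one_eq_two, mul_pow, show (2 : ℝ) ^ 2 = 4 by norm_num] at this

lemma two_pi_rpow_mul_mittagLeffler_sin {β : ℝ} (hβ : 0 ≤ β) :
    (2 * π) ^ (β + 2) * mittagLeffler 2 (β + 3) (-(4 * π ^ 2))
      = -(sinMoment (2 * π) β / Gamma (β + 1)) := by
  have := mul_rpow_mul_mittagLeffler_of_recurrence (m := sinMoment (2 * π)) (σ := -1) (r := 2)
    two_pi_pos hβ zero_le_two
    (fun p hp => abs_integral_rpow_mul_le two_pi_pos.le hp abs_sin_le_one)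
    (fun p hp => by
      rw [neg_one_mul, add_assoc, show (2 : ℝ) + 1 = 3 by norm_num]
      exact sinMoment_two_pi_add_two hp)
  rw [add_assoc, show (2 : ℝ) + 1 = 3 by norm_num, mul_pow,
    show (2 : ℝ) ^ 2 = 4 by norm_num] at this
  linarith

lemma two_pi_rpow_add_two (x : ℝ) : (2 * π) ^ (x + 2) = (2 * π) ^ x * (4 * π ^ 2) := by
  rw [rpow_add two_pi_pos, rpow_two]
  ring

lemma two_pi_rpow_neg_mul_mittagLeffler {α : ℝ} (hα : α < 1) :
    (2 * π) ^ (-α) * mittagLeffler 2 (1 - α) (-(4 * π ^ 2))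
      = (2 * π) ^ (-α) / Gamma (1 - α) - cosMoment (2 * π) (1 - α) / Gamma (2 - α) := by
  have h := two_pi_rpow_mul_mittagLeffler_cos (β := 1 - α) (by linarith)
  rw [show 1 - α + 1 = -α + 2 by ring, two_pi_rpow_add_two,
    show -α + 2 = 2 - α by ring] at h
  rw [mittagLeffler_two_eq _ (by linarith), ← h]
  ring

lemma two_pi_rpow_one_sub_mul_mittagLeffler {α : ℝ} (hα : α < 1) :
    (2 * π) ^ (1 - α) * mittagLeffler 2 (2 - α) (-(4 * π ^ 2))
      = ((2 * π) ^ (1 - α) + sinMoment (2 * π) (1 - α)) / Gamma (2 - α) := by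
  have h := two_pi_rpow_mul_mittagLeffler_sin (β := 1 - α) (by linarith)
  rw [two_pi_rpow_add_two, show 1 - α + 3 = 2 - α + 2 by ring,
    show 1 - α + 1 = 2 - α by ring] at h
  rw [mittagLeffler_two_eq _ (by linarith), add_div, ← neg_neg (sinMoment _ _ / _), ← h]
  ring

lemma Dfml_const_mul (α L c : ℝ) (f : ℝ → ℝ) (t : ℝ) :
    Dfml α L (fun s => c * f s) t = c * Dfml α L f t := by
  simp only [Dfml, deriv_const_mul_field', mul_left_comm _ c, integral_const_mul]
  ring

lemma integral_sub_rpow_mul (t L p : ℝ) (g : ℝ → ℝ) :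
    ∫ τ in (t - L)..t, (t - τ) ^ p * g τ = ∫ s in 0..L, s ^ p * g (t - s) := by
  simpa using integral_comp_sub_left (fun s => s ^ p * g (t - s)) t (a := t - L) (b := t)

lemma integral_rpow_mul_cos_sub {p : ℝ} (hp : 0 ≤ p) (L t : ℝ) :
    ∫ s in 0..L, s ^ p * cos (t - s) = cos t * cosMoment L p + sin t * sinMoment L p := by
  have hcont := continuous_rpow_const hp
  simp only [cos_sub, mul_add, cosMoment, sinMoment, ← integral_const_mul]
  rw [← integral_add]
  · congr 1 with s; ring
  all_goals exact (continuous_const.mul (hcont.mul (by fun_prop))).intervalIntegrable _ _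

lemma integral_rpow_mul_sin_sub {p : ℝ} (hp : 0 ≤ p) (L t : ℝ) :
    ∫ s in 0..L, s ^ p * sin (t - s) = sin t * cosMoment L p - cos t * sinMoment L p := by
  have hcont := continuous_rpow_const hp
  simp only [sin_sub, mul_sub, cosMoment, sinMoment, ← integral_const_mul]
  rw [← integral_sub]
  · congr 1 with s; ring
  all_goals exact (continuous_const.mul (hcont.mul (by fun_prop))).intervalIntegrable _ _

lemma Dfml_cos {α : ℝ} (hα : α < 1) (L t : ℝ) :
    Dfml α L cos t
      = cos (t - L) * L ^ (-α) / Gamma (1 - α) - sin (t - L) * L ^ (1 - α) / Gamma (2 - α)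
        - (cos t * cosMoment L (1 - α) + sin t * sinMoment L (1 - α)) / Gamma (2 - α) := by
  simp only [Dfml, Real.deriv_cos', deriv.fun_neg, Real.deriv_sin, mul_neg, integral_neg,
    integral_sub_rpow_mul, integral_rpow_mul_cos_sub (by linarith : 0 ≤ 1 - α)]
  ring

lemma Dfml_sin {α : ℝ} (hα : α < 1) (L t : ℝ) :
    Dfml α L sin t
      = sin (t - L) * L ^ (-α) / Gamma (1 - α) + cos (t - L) * L ^ (1 - α) / Gamma (2 - α)
        - (sin t * cosMoment L (1 - α) - cos t * sinMoment L (1 - α)) / Gamma (2 - α) := by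
  simp only [Dfml, Real.deriv_cos', Real.deriv_sin, mul_neg, integral_neg,
    integral_sub_rpow_mul, integral_rpow_mul_sin_sub (by linarith : 0 ≤ 1 - α)]
  ring

theorem stmt_7_general (α : ℝ) (hα1 : α < 1) (c : ℝ)
    (a b : ℝ)
    (ha : a = (2 * Real.pi) ^ (-α) * mittagLeffler 2 (1 - α) (-(4 * Real.pi ^ 2)))
    (hb : b = (2 * Real.pi) ^ (1 - α) * mittagLeffler 2 (2 - α) (-(4 * Real.pi ^ 2)))
    (X : ℝ → Fin 2 → ℝ) (hX : ∀ t, X t = fun i => if i = 0 then c * Real.cos t else c * Real.sin t)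
    (A : Matrix (Fin 2) (Fin 2) ℝ) (hA : A = !![a, -b; b, a]) :
    (∀ t, Dfml α (2 * Real.pi) (fun s => c * Real.cos s) t = (A.mulVec (X t)) 0)
    ∧ (∀ t, Dfml α (2 * Real.pi) (fun s => c * Real.sin s) t = (A.mulVec (X t)) 1)
    ∧ (∀ t, X (t + 2 * Real.pi) = X t)
    ∧ (c ≠ 0 → ¬ ∀ t s, X t = X s) := by
  rw [two_pi_rpow_neg_mul_mittagLeffler hα1] at ha
  rw [two_pi_rpow_one_sub_mul_mittagLeffler hα1] at hb
  refine ⟨fun t => ?_, fun t => ?_, fun t => ?_, fun hc hconst => ?_⟩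
  · rw [Dfml_const_mul, Dfml_cos hα1, cos_sub_two_pi, sin_sub_two_pi, hX, hA, ha, hb]
    simp only [mulVec, dotProduct, Fin.sum_univ_two, of_apply, cons_val', cons_val_zero,
      cons_val_one, cons_val_fin_one, mul_ite, ↓reduceIte, one_ne_zero, neg_mul]
    ring
  · rw [Dfml_const_mul, Dfml_sin hα1, cos_sub_two_pi, sin_sub_two_pi, hX, hA, ha, hb]
    simp only [mulVec, dotProduct, Fin.sum_univ_two, of_apply, cons_val', cons_val_zero,
      cons_val_one, cons_val_fin_one, mul_ite, ↓reduceIte, one_ne_zero]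
    ring
  · simp only [hX, cos_add_two_pi, sin_add_two_pi]
  · have h := congrFun (hconst 0 π) 0
    simp only [hX, if_pos, cos_zero, cos_pi] at h
    exact hc (by linarith)

theorem stmt_7 (α : ℝ) (hα0 : 0 < α) (hα1 : α < 1) (c : ℝ)
    (a b : ℝ)
    (ha : a = (2 * Real.pi) ^ (-α) * mittagLeffler 2 (1 - α) (-(4 * Real.pi ^ 2)))
    (hb : b = (2 * Real.pi) ^ (1 - α) * mittagLeffler 2 (2 - α) (-(4 * Real.pi ^ 2)))
    (X : ℝ → Fin 2 → ℝ) (hX : ∀ t, X t = fun i => if i = 0 then c * Real.cos t else c * Real.sin t)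
    (A : Matrix (Fin 2) (Fin 2) ℝ) (hA : A = !![a, -b; b, a]) :
    (∀ t, Dfml α (2 * Real.pi) (fun s => c * Real.cos s) t = (A.mulVec (X t)) 0)
    ∧ (∀ t, Dfml α (2 * Real.pi) (fun s => c * Real.sin s) t = (A.mulVec (X t)) 1)
    ∧ (∀ t, X (t + 2 * Real.pi) = X t)
    ∧ (c ≠ 0 → ¬ ∀ t s, X t = X s) :=
  stmt_7_general α hα1 c a b ha hb X hX A hA
end
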